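/- Let u_1, ..., u_m ∈ ℝ^n be pairwise orthogonal unit vectors, A a symmetric n×n matrix, b ∈ ℝ^m, and λ > 0. Define G = ∑_{i=1}^m u_i u_i^⊤ λ sinh(λ(u_i^⊤ A u_i − b_i)). Then (1/λ^2)‖G‖_F^2 ≥ (1/m)(∑_{i=1}^m cosh(λ(u_i^⊤ A u_i − b_i)) − m)^2. -/

import Mathlib

/-!
The rank-one matrices `u i u iᵀ` are orthonormal for the Frobenius inner product, so
`‖G‖_F² = λ² ∑ sinh² xᵢ` with `xᵢ = λ (u iᵀ A u i - b i)`. Since `cosh² - sinh² = 1` and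
`cosh ≥ 1`, we have `(cosh x - 1)² ≤ sinh² x`, and Cauchy–Schwarz gives
`(∑ (cosh xᵢ - 1))² ≤ m ∑ (cosh xᵢ - 1)²`.
-/

open Matrix Finset

lemma cosh_sub_one_sq_le_sinh_sq (x : ℝ) : (Real.cosh x - 1) ^ 2 ≤ Real.sinh x ^ 2 := by
  nlinarith [Real.one_le_cosh x, Real.cosh_sq x]

lemma sq_sum_cosh_sub_card_le_card_mul_sum_sinh_sq {ι : Type*} [Fintype ι] (s : ι → ℝ) :
    (∑ i, Real.cosh (s i) - (Fintype.card ι : ℝ)) ^ 2 ≤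
      (Fintype.card ι : ℝ) * ∑ i, Real.sinh (s i) ^ 2 :=
  calc (∑ i, Real.cosh (s i) - (Fintype.card ι : ℝ)) ^ 2
        = (∑ i, (Real.cosh (s i) - 1)) ^ 2 := by
        simp [Finset.sum_sub_distrib]
    _ ≤ (Fintype.card ι : ℝ) * ∑ i, (Real.cosh (s i) - 1) ^ 2 := by
        simpa using sq_sum_le_card_mul_sum_sq (s := univ) (f := fun i => Real.cosh (s i) - 1)
    _ ≤ (Fintype.card ι : ℝ) * ∑ i, Real.sinh (s i) ^ 2 :=
        mul_le_mul_of_nonneg_left (sum_le_sum fun i _ => cosh_sub_one_sq_le_sinh_sq (s i))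
          (Nat.cast_nonneg _)

lemma sum_sum_vecMulVec_mul_vecMulVec {R n : Type*} [CommSemiring R] [Fintype n]
    (x y z w : n → R) :
    ∑ a, ∑ b, vecMulVec x y a b * vecMulVec z w a b = (x ⬝ᵥ z) * (y ⬝ᵥ w) := by
  simp only [vecMulVec_apply, dotProduct, sum_mul_sum]
  exact sum_congr rfl fun a _ => sum_congr rfl fun b _ => by ring

lemma sum_sum_sq_sum_smul_vecMulVec {R ι n : Type*} [CommSemiring R] [Fintype ι] [Fintype n]
    (u : ι → n → R) (horth : ∀ i j, i ≠ j → u i ⬝ᵥ u j = 0)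
    (hunit : ∀ i, u i ⬝ᵥ u i = 1) (c : ι → R) :
    ∑ a, ∑ b, (∑ i, c i • vecMulVec (u i) (u i)) a b ^ 2 = ∑ i, c i ^ 2 :=
  calc ∑ a, ∑ b, (∑ i, c i • vecMulVec (u i) (u i)) a b ^ 2
      = ∑ i, ∑ j, c i * c j *
          ∑ a, ∑ b, vecMulVec (u i) (u i) a b * vecMulVec (u j) (u j) a b := by
        simp only [sq, Matrix.sum_apply, Matrix.smul_apply, smul_eq_mul, sum_mul, mul_sum,
          sum_comm (γ := n) (α := ι)]
        refine sum_congr rfl fun i _ => sum_congr rfl fun j _ => sum_congr rfl fun a _ =>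
          sum_congr rfl fun b _ => ?_
        ring
    _ = ∑ i, c i ^ 2 := by
        refine sum_congr rfl fun i _ => ?_
        rw [sum_eq_single_of_mem i (mem_univ i) fun j _ hji => ?_]
        · simp [sum_sum_vecMulVec_mul_vecMulVec, hunit, sq]
        · simp [sum_sum_vecMulVec_mul_vecMulVec, horth i j hji.symm]

theorem gradient_norm_lower_bound_general {m n : ℕ} (u : Fin m → Fin n → ℝ)
    (horth : ∀ i j, i ≠ j → u i ⬝ᵥ u j = 0) (hunit : ∀ i, u i ⬝ᵥ u i = 1)
    (A : Matrix (Fin n) (Fin n) ℝ) (b : Fin m → ℝ)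
    (lam : ℝ) (hlam : 0 < lam)
    (G : Matrix (Fin n) (Fin n) ℝ)
    (hG : G = ∑ i, (lam * Real.sinh (lam * (u i ⬝ᵥ A.mulVec (u i) - b i))) •
      vecMulVec (u i) (u i)) :
    (1 / lam ^ 2) * (∑ a, ∑ c, G a c ^ 2) ≥
      (1 / m) * ((∑ i, Real.cosh (lam * (u i ⬝ᵥ A.mulVec (u i) - b i))) - m) ^ 2 := by
  set s : Fin m → ℝ := fun i => lam * (u i ⬝ᵥ A.mulVec (u i) - b i)
  have hfrob : (1 / lam ^ 2) * (∑ a, ∑ c, G a c ^ 2) = ∑ i, Real.sinh (s i) ^ 2 := by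
    rw [hG, sum_sum_sq_sum_smul_vecMulVec u horth hunit, mul_sum]
    refine sum_congr rfl fun i _ => ?_
    field_simp
    rfl
  have hcs := sq_sum_cosh_sub_card_le_card_mul_sum_sinh_sq s
  rw [Fintype.card_fin] at hcs
  rw [hfrob, ge_iff_le, one_div_mul_eq_div]
  exact div_le_of_le_mul₀ m.cast_nonneg (sum_nonneg fun i _ => sq_nonneg _)
    (by rwa [mul_comm] at hcs)

theorem gradient_norm_lower_bound {m n : ℕ} (u : Fin m → Fin n → ℝ)
    (horth : ∀ i j, i ≠ j → u i ⬝ᵥ u j = 0) (hunit : ∀ i, u i ⬝ᵥ u i = 1)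
    (A : Matrix (Fin n) (Fin n) ℝ) (hA : A.IsSymm) (b : Fin m → ℝ)
    (lam : ℝ) (hlam : 0 < lam)
    (G : Matrix (Fin n) (Fin n) ℝ)
    (hG : G = ∑ i, (lam * Real.sinh (lam * (u i ⬝ᵥ A.mulVec (u i) - b i))) •
      vecMulVec (u i) (u i)) :
    (1 / lam ^ 2) * (∑ a, ∑ c, G a c ^ 2) ≥
      (1 / m) * ((∑ i, Real.cosh (lam * (u i ⬝ᵥ A.mulVec (u i) - b i))) - m) ^ 2 :=
  gradient_norm_lower_bound_general u horth hunit A b lam hlam G hG
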